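/- arXiv:1506.01362 — 2 statements merged into one kernel-verified Lean document; each statement's English description precedes it below -/
import Mathlib

section
/- Let $G_1$ and $G_2$ be connected graphs on disjoint vertex sets $[n_1]$ and $[n_2]$, and let $G = G_1 * G_2$ be their join. Then a nonempty subset $T$ of $[n_1] \cup [n_2]$ has the cut point property for $G$ if and only if either $T = T_1 \cup [n_2]$ for some nonempty $T_1$ having the cut point property for $G_1$, or $T = T_2 \cup [n_1]$ for some nonempty $T_2$ having the cut point property for $G_2$. -/
/-!
In a join every vertex of one side is adjacent to every vertex of the other, so an induced
subgraph meeting both sides is connected. If `T` has the cut point property, `Tᶜ` has at least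
two components, hence lies on one side, say `V₁`, and `T = T₁ ∪ V₂`. Induced subgraphs inside
`V₁` are copies of those of `G₁`, which handles the cut points `i ∈ T₁`; for `i ∈ V₂` the set
`T₁ᶜ ∪ {i}` is connected, so `i` is a cut point exactly when `T₁ᶜ` is disconnected, which the
cut point property of `T₁ ≠ ∅` guarantees. Connectedness of `G₁` excludes `T₁ = ∅`. The other
side follows from the symmetry `G₁ * G₂ ≃ G₂ * G₁`.
-/

open SimpleGraph Set

/-- Number of connected components of the induced subgraph of `G` on `s`. -/
noncomputable def nc {V : Type*} (G : SimpleGraph V) (s : Set V) : ℕ :=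
  Nat.card (G.induce s).ConnectedComponent

/-- `T` has the cut point property for `G`: every `i ∈ T` is a cut point of the
induced subgraph on `Tᶜ ∪ {i}` (removing `i` increases the number of components). -/
def CutPointProperty {V : Type*} (G : SimpleGraph V) (T : Set V) : Prop :=
  ∀ i ∈ T, nc G (Tᶜ ∪ {i}) < nc G Tᶜ

/-- The join `G₁ * G₂` of two graphs on disjoint vertex sets. -/
def joinGraph {V₁ V₂ : Type*} (G₁ : SimpleGraph V₁) (G₂ : SimpleGraph V₂) :
    SimpleGraph (V₁ ⊕ V₂) where
  Adj v w :=
    match v, w with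
    | Sum.inl a, Sum.inl b => G₁.Adj a b
    | Sum.inr a, Sum.inr b => G₂.Adj a b
    | Sum.inl _, Sum.inr _ => True
    | Sum.inr _, Sum.inl _ => True
  symm := by refine ⟨?_⟩; rintro (a | a) (b | b) h <;> simp_all <;> exact h.symm
  loopless := by refine ⟨?_⟩; rintro (a | a) h <;> simp_all

/-- Disjoint union of an indexed family of graphs. -/
def sigmaGraph {ι : Type*} {V : ι → Type*} (G : ∀ i, SimpleGraph (V i)) :
    SimpleGraph (Σ i, V i) where
  Adj v w := ∃ h : v.1 = w.1, (G w.1).Adj (h ▸ v.2) w.2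
  symm := by
    refine ⟨?_⟩
    rintro ⟨i, a⟩ ⟨j, b⟩ ⟨h, hab⟩
    dsimp at h hab ⊢
    subst h
    exact ⟨rfl, hab.symm⟩
  loopless := by
    refine ⟨?_⟩
    rintro ⟨i, a⟩ ⟨h, hab⟩
    dsimp at h hab
    exact (G i).irrefl hab
/-- The corona `H ⊙ H'`: one copy of `H'` for each vertex `v` of `H`,
with every vertex of the copy joined to `v`. -/
def coronaGraph {V₁ V₂ : Type*} (H : SimpleGraph V₁) (H' : SimpleGraph V₂) :
    SimpleGraph (V₁ ⊕ V₁ × V₂) where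
  Adj v w :=
    match v, w with
    | Sum.inl a, Sum.inl b => H.Adj a b
    | Sum.inl a, Sum.inr p => a = p.1
    | Sum.inr p, Sum.inl b => p.1 = b
    | Sum.inr p, Sum.inr q => p.1 = q.1 ∧ H'.Adj p.2 q.2
  symm := by
    refine ⟨?_⟩
    rintro (a | p) (b | q) h <;> dsimp at h ⊢
    · exact h.symm
    · exact h.symm
    · exact h.symm
    · exact ⟨h.1.symm, h.2.symm⟩
  loopless := by refine ⟨?_⟩; rintro (a | p) h <;> simp_all

/-- The whisker graph `W(H)`: a pendant vertex attached to each vertex of `H`. -/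
def whiskerGraph {V : Type*} (H : SimpleGraph V) : SimpleGraph (V ⊕ V) where
  Adj v w :=
    match v, w with
    | Sum.inl a, Sum.inl b => H.Adj a b
    | Sum.inl a, Sum.inr b => a = b
    | Sum.inr a, Sum.inl b => a = b
    | Sum.inr _, Sum.inr _ => False
  symm := by refine ⟨?_⟩; rintro (a | a) (b | b) h <;> simp_all; exact h.symm
  loopless := by refine ⟨?_⟩; rintro (a | a) h <;> simp_all

/-- `F` is (the vertex set of) a maximal clique of `G`. -/
def MaxClique {V : Type*} (G : SimpleGraph V) (F : Set V) : Prop :=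
  Maximal G.IsClique F

/-- A graph is chordal if every cycle of length at least 4 has a chord. -/
def IsChordal {V : Type*} (G : SimpleGraph V) : Prop :=
  ∀ (n : ℕ), 4 ≤ n → ∀ c : ℕ → V, Set.InjOn c (Set.Iio n) →
    (∀ i < n, G.Adj (c i) (c ((i + 1) % n))) →
    ∃ i < n, ∃ j < n, j ≠ i ∧ j ≠ (i + 1) % n ∧ i ≠ (j + 1) % n ∧ G.Adj (c i) (c j)

/-- A generalized block graph: a connected chordal graph in which any three distinct
maximal cliques with nonempty common intersection have all pairwise intersections equal. -/
def GenBlockGraph {V : Type*} (G : SimpleGraph V) : Prop :=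
  G.Connected ∧ IsChordal G ∧
    ∀ F₁ F₂ F₃ : Set V, MaxClique G F₁ → MaxClique G F₂ → MaxClique G F₃ →
      F₁ ≠ F₂ → F₁ ≠ F₃ → F₂ ≠ F₃ → (F₁ ∩ F₂ ∩ F₃).Nonempty →
      F₁ ∩ F₂ = F₁ ∩ F₃ ∧ F₁ ∩ F₂ = F₂ ∩ F₃

/-- `A` is a cut set of `G`: deleting `A` increases the number of connected components. -/
def IsCutSet {V : Type*} (G : SimpleGraph V) (A : Set V) : Prop :=
  nc G Set.univ < nc G Aᶜ

/-- `A` is an inclusion-minimal cut set of `G`. -/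
def IsMinCutSet {V : Type*} (G : SimpleGraph V) (A : Set V) : Prop :=
  IsCutSet G A ∧ ∀ B ⊂ A, ¬ IsCutSet G B

/-- `A` is a `t`-minimal cut set of `G`: a minimal cut set which is the common
intersection of exactly `t` maximal cliques of `G` and disjoint from all other
maximal cliques. -/
def IsTMinCut {V : Type*} (G : SimpleGraph V) (t : ℕ) (A : Set V) : Prop :=
  IsMinCutSet G A ∧
  {F : Set V | MaxClique G F ∧ A ⊆ F}.ncard = t ∧
  ⋂₀ {F : Set V | MaxClique G F ∧ A ⊆ F} = A ∧
  ∀ F : Set V, MaxClique G F → ¬ A ⊆ F → F ∩ A = ∅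

/-- `B` is a branch of the facet `F` in the clique complex of `G`. -/
def IsBranch {V : Type*} (G : SimpleGraph V) (F B : Set V) : Prop :=
  MaxClique G B ∧ B ≠ F ∧ ∀ H : Set V, MaxClique G H → H ≠ F → H ∩ F ⊆ B ∩ F

/-- `F` is a leaf of the clique complex of `G`. -/
def IsLeafClique {V : Type*} (G : SimpleGraph V) (F : Set V) : Prop :=
  MaxClique G F ∧ ((∀ F' : Set V, MaxClique G F' → F' = F) ∨ ∃ B, IsBranch G F B)

section ComponentCount

variable {V W : Type*} {G : SimpleGraph V} {H : SimpleGraph W}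

lemma nc_eq_one_of_connected {s : Set V} (h : (G.induce s).Connected) : nc G s = 1 :=
  Nat.card_eq_one_iff_unique.2 ⟨h.preconnected.subsingleton_connectedComponent,
    h.nonempty.map (G.induce s).connectedComponentMk⟩

lemma nc_univ_eq_one (h : G.Connected) : nc G univ = 1 :=
  nc_eq_one_of_connected ((induceUnivIso G).connected_iff.2 h)

lemma one_le_nc [Finite V] {s : Set V} (hs : s.Nonempty) : 1 ≤ nc G s :=
  have : Nonempty s := hs.to_subtype
  Nat.card_pos

lemma nonempty_of_nc_pos {s : Set V} (h : 0 < nc G s) : s.Nonempty := by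
  obtain ⟨⟨c⟩, -⟩ := Nat.card_pos_iff.1 h
  obtain ⟨v, -⟩ := c.exists_rep
  exact ⟨v, v.2⟩

lemma nc_image (f : G ↪g H) (s : Set V) : nc H (f '' s) = nc G s :=
  let e : G.induce s ≃g H.induce (f '' s) := ⟨Equiv.Set.image f s f.injective, f.map_adj_iff⟩
  (Nat.card_congr e.connectedComponentEquiv).symm

lemma CutPointProperty.one_lt_nc_compl [Finite V] {T : Set V} (h : CutPointProperty G T)
    (hT : T.Nonempty) : 1 < nc G Tᶜ :=
  let ⟨i, hi⟩ := hT
  (one_le_nc ⟨i, Or.inr rfl⟩).trans_lt (h i hi)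

lemma cutPointProperty_image_iff (e : G ≃g H) (T : Set V) :
    CutPointProperty H (e '' T) ↔ CutPointProperty G T := by
  have hcompl : (e '' T)ᶜ = e '' Tᶜ := (image_compl_eq e.bijective).symm
  simp only [CutPointProperty, forall_mem_image, hcompl, ← image_singleton, ← image_union]
  simp only [← RelIso.coe_toRelEmbedding, nc_image]

end ComponentCount

section JoinGraph

variable {V₁ V₂ : Type*} (G₁ : SimpleGraph V₁) (G₂ : SimpleGraph V₂)

def joinGraph.inlEmbedding : G₁ ↪g joinGraph G₁ G₂ := ⟨.inl, .rfl⟩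

def joinGraph.commIso : joinGraph G₁ G₂ ≃g joinGraph G₂ G₁ :=
  ⟨Equiv.sumComm V₁ V₂, by rintro (a | a) (b | b) <;> rfl⟩

variable {G₁ G₂}

lemma nc_joinGraph_image_inl (s : Set V₁) :
    nc (joinGraph G₁ G₂) (Sum.inl '' s) = nc G₁ s :=
  nc_image (joinGraph.inlEmbedding G₁ G₂) s

lemma joinGraph_induce_connected {s : Set (V₁ ⊕ V₂)} {a : V₁} {b : V₂}
    (ha : Sum.inl a ∈ s) (hb : Sum.inr b ∈ s) : ((joinGraph G₁ G₂).induce s).Connected := by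
  have : Nonempty s := ⟨⟨_, ha⟩⟩
  have hreach : ∀ x : s, ((joinGraph G₁ G₂).induce s).Reachable x ⟨_, hb⟩ := by
    rintro ⟨_ | _, hx⟩
    · exact Adj.reachable trivial
    · have hab : ((joinGraph G₁ G₂).induce s).Adj ⟨_, ha⟩ ⟨_, hb⟩ := trivial
      exact (Adj.reachable trivial).trans hab.reachable
  exact ⟨fun x y => (hreach x).trans (hreach y).symm⟩

lemma range_inr_subset_or_range_inl_subset_of_one_lt_nc_compl {T : Set (V₁ ⊕ V₂)}
    (h : 1 < nc (joinGraph G₁ G₂) Tᶜ) : range Sum.inr ⊆ T ∨ range Sum.inl ⊆ T := by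
  refine or_iff_not_and_not.2 fun ⟨hr, hl⟩ => ?_
  obtain ⟨_, ⟨b, rfl⟩, hb⟩ := not_subset.1 hr
  obtain ⟨_, ⟨a, rfl⟩, ha⟩ := not_subset.1 hl
  have := nc_eq_one_of_connected
    (joinGraph_induce_connected (G₁ := G₁) (G₂ := G₂) (s := Tᶜ) ha hb)
  omega

lemma compl_image_inl_union_range_inr (T₁ : Set V₁) :
    (Sum.inl '' T₁ ∪ range Sum.inr : Set (V₁ ⊕ V₂))ᶜ = Sum.inl '' T₁ᶜ := by
  ext (a | b) <;> simp

lemma cutPointProperty_joinGraph_inl_iff [Finite V₁] {T₁ : Set V₁} (hT₁ : T₁.Nonempty) :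
    CutPointProperty (joinGraph G₁ G₂) (Sum.inl '' T₁ ∪ range Sum.inr) ↔
      CutPointProperty G₁ T₁ := by
  simp only [CutPointProperty, compl_image_inl_union_range_inr, mem_union, or_imp, forall_and,
    forall_mem_image, forall_mem_range]
  have hinl : (∀ a ∈ T₁, nc (joinGraph G₁ G₂) (Sum.inl '' T₁ᶜ ∪ {Sum.inl a}) <
      nc (joinGraph G₁ G₂) (Sum.inl '' T₁ᶜ)) ↔ CutPointProperty G₁ T₁ := by
    simp only [← image_singleton, ← image_union, nc_joinGraph_image_inl]
    rfl
  rw [hinl]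
  refine and_iff_left_of_imp fun hcut b => ?_
  obtain ⟨c, hc⟩ := nonempty_of_nc_pos (hcut.one_lt_nc_compl hT₁).pos
  rw [nc_eq_one_of_connected (joinGraph_induce_connected (Or.inl ⟨c, hc, rfl⟩) (Or.inr rfl)),
    nc_joinGraph_image_inl]
  exact hcut.one_lt_nc_compl hT₁

variable [Finite V₁] [Finite V₂]

lemma cutPointProperty_joinGraph_iff_of_range_inr_subset (h₁ : G₁.Connected)
    {T : Set (V₁ ⊕ V₂)} (hT : T.Nonempty) (hTr : range Sum.inr ⊆ T) :
    CutPointProperty (joinGraph G₁ G₂) T ↔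
      ∃ T₁ : Set V₁, T₁.Nonempty ∧ CutPointProperty G₁ T₁ ∧
        T = Sum.inl '' T₁ ∪ range Sum.inr := by
  refine ⟨fun hcut => ?_, fun ⟨T₁, hT₁, hcut, hT⟩ =>
    hT ▸ (cutPointProperty_joinGraph_inl_iff hT₁).2 hcut⟩
  have hTeq : T = Sum.inl '' (Sum.inl ⁻¹' T) ∪ range Sum.inr := by
    ext (a | b)
    · simp
    · simpa using hTr (mem_range_self b)
  -- if `T` were `range inr`, its complement would be a copy of the connected `G₁`
  have hne : (Sum.inl ⁻¹' T).Nonempty := by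
    refine nonempty_iff_ne_empty.2 fun h => ?_
    have := hcut.one_lt_nc_compl hT
    rw [hTeq, h, compl_image_inl_union_range_inr, compl_empty,
      nc_joinGraph_image_inl, nc_univ_eq_one h₁] at this
    exact this.false
  refine ⟨_, hne, (cutPointProperty_joinGraph_inl_iff (G₂ := G₂) hne).1 ?_, hTeq⟩
  rwa [← hTeq]

lemma cutPointProperty_joinGraph_iff_of_range_inl_subset (h₂ : G₂.Connected)
    {T : Set (V₁ ⊕ V₂)} (hT : T.Nonempty) (hTl : range Sum.inl ⊆ T) :
    CutPointProperty (joinGraph G₁ G₂) T ↔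
      ∃ T₂ : Set V₂, T₂.Nonempty ∧ CutPointProperty G₂ T₂ ∧
        T = Sum.inr '' T₂ ∪ range Sum.inl := by
  let e := joinGraph.commIso G₂ G₁
  obtain ⟨T', rfl⟩ := image_surjective.2 e.surjective T
  have hswap (T₂ : Set V₂) :
      Sum.inr '' T₂ ∪ range Sum.inl = e '' (Sum.inl '' T₂ ∪ range Sum.inr) := by
    ext (a | b) <;> simp [e, joinGraph.commIso]
  have hT'r : range Sum.inr ⊆ T' := by
    rintro _ ⟨a, rfl⟩
    exact e.injective.mem_set_image.1 (hTl ⟨a, rfl⟩)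
  simp only [cutPointProperty_image_iff,
    cutPointProperty_joinGraph_iff_of_range_inr_subset h₂ hT.of_image hT'r, hswap,
    image_eq_image e.injective]

end JoinGraph

/-- the nonempty sets with the cut point property for the join of two
connected graphs. -/
theorem stmt1 {V₁ V₂ : Type*} [Fintype V₁] [Fintype V₂]
    (G₁ : SimpleGraph V₁) (G₂ : SimpleGraph V₂)
    (h₁ : G₁.Connected) (h₂ : G₂.Connected)
    (T : Set (V₁ ⊕ V₂)) (hT : T.Nonempty) :
    CutPointProperty (joinGraph G₁ G₂) T ↔
      (∃ T₁ : Set V₁, T₁.Nonempty ∧ CutPointProperty G₁ T₁ ∧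
        T = Sum.inl '' T₁ ∪ Set.range Sum.inr) ∨
      (∃ T₂ : Set V₂, T₂.Nonempty ∧ CutPointProperty G₂ T₂ ∧
        T = Sum.inr '' T₂ ∪ Set.range Sum.inl) := by
  constructor
  · intro hcut
    rcases range_inr_subset_or_range_inl_subset_of_one_lt_nc_compl (hcut.one_lt_nc_compl hT)
      with hr | hl
    · exact .inl ((cutPointProperty_joinGraph_iff_of_range_inr_subset h₁ hT hr).1 hcut)
    · exact .inr ((cutPointProperty_joinGraph_iff_of_range_inl_subset h₂ hT hl).1 hcut)
  · rintro (⟨T₁, hT₁⟩ | ⟨T₂, hT₂⟩)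
    · have hr : range Sum.inr ⊆ T := hT₁.2.2 ▸ subset_union_right
      exact (cutPointProperty_joinGraph_iff_of_range_inr_subset h₁ hT hr).2 ⟨T₁, hT₁⟩
    · have hl : range Sum.inl ⊆ T := hT₂.2.2 ▸ subset_union_right
      exact (cutPointProperty_joinGraph_iff_of_range_inl_subset h₂ hT hl).2 ⟨T₂, hT₂⟩
end

section
/- Let $H_1$ and $H_2$ be connected graphs on disjoint vertex sets such that $c_{H_i}(T) = |T|+1$ for all $T \in \mathcal{C}(H_i)$, $i = 1,2$. Then the join $G = H_1 * H_2$ satisfies $c_G(T) = |T| + 1$ for all $T \in \mathcal{C}(G)$ if and only if $H_1$ and $H_2$ are both complete graphs. -/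
open SimpleGraph Set

/-! A connected non-complete graph `H₁` has a minimal vertex separator `S` between two
non-adjacent vertices; every `i ∈ S` is a cut point of `H₁ - (S \ {i})`, and by unmixedness
`H₁ - S` has `|S| + 1` components. In the join, `T = S ∪ V(H₂)` keeps the cut point property
(a vertex of `H₂` glues all of `H₁ - S` together), but `G - T = H₁ - S` has only
`|S| + 1 < |T| + 1` components. Conversely the join of complete graphs is complete, and a
complete graph has no cut points. -/

namespace SimpleGraph

variable {V W : Type*} {G : SimpleGraph V} {G' : SimpleGraph W}

/-- Rauf–Rinaldo's combinatorial criterion for unmixedness of the binomial edge ideal of `G`. -/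
def IsUnmixed (G : SimpleGraph V) : Prop :=
  ∀ T : Set V, CutPointProperty G T → nc G Tᶜ = T.ncard + 1

def Separates (G : SimpleGraph V) (a b : V) (S : Set V) : Prop :=
  ∀ p : G.Walk a b, ∃ x ∈ p.support, x ∈ S

lemma nc_eq_one {s : Set V} (h : (G.induce s).Connected) : nc G s = 1 :=
  have := h.preconnected.subsingleton_connectedComponent
  have : Nonempty (G.induce s).ConnectedComponent :=
    ⟨(G.induce s).connectedComponentMk h.nonempty.some⟩
  Nat.card_eq_one_iff_unique.2 ⟨inferInstance, inferInstance⟩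

lemma nc_le_one {s : Set V} (h : (G.induce s).Preconnected) : nc G s ≤ 1 :=
  have := h.subsingleton_connectedComponent
  Finite.card_le_one_iff_subsingleton.2 inferInstance

lemma nc_congr {s : Set V} {t : Set W} (e : G.induce s ≃g G'.induce t) : nc G s = nc G' t :=
  Nat.card_congr e.connectedComponentEquiv

lemma Iso.nc_image (e : G ≃g G') (s : Set V) : nc G' (e '' s) = nc G s :=
  (nc_congr (e.induce (e.injective.injOn.bijOn_image (s := s)))).symm

lemma Iso.compl_image (e : G ≃g G') (s : Set V) : (e '' s)ᶜ = e '' sᶜ :=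
  (Set.image_compl_eq e.bijective).symm

lemma CutPointProperty.image (e : G ≃g G') {T : Set V} (hT : CutPointProperty G T) :
    CutPointProperty G' (e '' T) := by
  rintro _ ⟨i, hi, rfl⟩
  rw [e.compl_image, ← Set.image_singleton, ← Set.image_union, e.nc_image, e.nc_image]
  exact hT i hi

lemma IsUnmixed.of_iso (e : G ≃g G') (h : G'.IsUnmixed) : G.IsUnmixed := by
  intro T hT
  have := h (e '' T) (hT.image e)
  rwa [e.compl_image, e.nc_image, Set.ncard_image_of_injective T e.injective] at this

lemma eq_empty_of_cutPointProperty_top {T : Set V} (hT : CutPointProperty (⊤ : SimpleGraph V) T) :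
    T = ∅ := by
  refine Set.eq_empty_of_forall_notMem fun i hi => ?_
  have hlt := hT i hi
  rw [nc_eq_one (by simp)] at hlt
  have := nc_le_one (G := ⊤) (s := Tᶜ) (by simp)
  omega

lemma isUnmixed_top [Nonempty V] : (⊤ : SimpleGraph V).IsUnmixed := by
  intro T hT
  rw [eq_empty_of_cutPointProperty_top hT, Set.compl_empty, Set.ncard_empty,
    nc_eq_one (by simp)]

lemma separates_compl_pair {a b : V} (hab : a ≠ b) (hnadj : ¬ G.Adj a b) :
    G.Separates a b {a, b}ᶜ := by
  rintro (_ | ⟨h, p⟩)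
  · exact absurd rfl hab
  · refine ⟨_, List.mem_cons_of_mem _ p.start_mem_support, ?_⟩
    rintro (h' | h')
    · exact h.ne h'.symm
    · exact hnadj (h'.symm ▸ h)

lemma Separates.not_reachable {a b : V} {s : Set V} (h : G.Separates a b sᶜ) (ha : a ∈ s)
    (hb : b ∈ s) : ¬ (G.induce s).Reachable ⟨a, ha⟩ ⟨b, hb⟩ := by
  rintro ⟨q⟩
  obtain ⟨x, hx, hxs⟩ := h (q.map (Embedding.induce s).toHom)
  obtain ⟨y, -, rfl⟩ := List.mem_map.1 (Walk.support_map _ _ ▸ hx)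
  exact hxs y.2

/-- Adding `i` merges the components of `a` and `b`, and every new component meets `u`. -/
lemma nc_insert_lt [Finite V] {u : Set V} {i a b : V} (ha : a ∈ u) (hb : b ∈ u)
    (p : G.Walk a b) (hp : ∀ x ∈ p.support, x ∈ insert i u) (hsep : G.Separates a b uᶜ) :
    nc G (insert i u) < nc G u := by
  classical
  have hi : i ∈ p.support := by
    obtain ⟨x, hx, hxu⟩ := hsep p
    obtain rfl | hx' := hp x hx
    · exact hx
    · exact absurd hx' hxu
  let f := ConnectedComponent.map (G.induceHomOfLE (Set.subset_insert i u)).toHom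
  have hsurj : f.Surjective := by
    refine ConnectedComponent.ind fun ⟨v, hv⟩ => ?_
    obtain rfl | hv := hv
    · refine ⟨(G.induce u).connectedComponentMk ⟨a, ha⟩, ConnectedComponent.sound ⟨?_⟩⟩
      exact (p.takeUntil v hi).induce _ fun x hx =>
        hp x (p.support_takeUntil_subset_support hi hx)
    · exact ⟨(G.induce u).connectedComponentMk ⟨v, hv⟩, rfl⟩
  have hab : f ((G.induce u).connectedComponentMk ⟨a, ha⟩) =
      f ((G.induce u).connectedComponentMk ⟨b, hb⟩) :=
    ConnectedComponent.sound ⟨p.induce _ hp⟩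
  have hninj : ¬ f.Injective := fun hf =>
    hsep.not_reachable ha hb (ConnectedComponent.eq.1 (hf hab))
  refine (Nat.card_le_card_of_surjective f hsurj).lt_of_ne fun h => hninj ?_
  exact (hsurj.bijective_of_nat_card_le h.ge).1

/-- A minimal separator between two non-adjacent vertices has the cut point property. -/
lemma Connected.exists_nonempty_cutPointProperty [Finite V] (hG : G.Connected) (hne : G ≠ ⊤) :
    ∃ S : Set V, S.Nonempty ∧ CutPointProperty G S := by
  obtain ⟨a, b, hab, hnadj⟩ := ne_top_iff_exists_not_adj.1 hne
  obtain ⟨S, -, hmin⟩ := exists_minimal_le_of_wellFoundedLT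
    (fun S : Set V => S ⊆ {a, b}ᶜ ∧ G.Separates a b S) _
    ⟨le_rfl, separates_compl_pair hab hnadj⟩
  obtain ⟨hSab, hS⟩ := hmin.prop
  have ha : a ∈ Sᶜ := fun h => hSab h (Or.inl rfl)
  have hb : b ∈ Sᶜ := fun h => hSab h (Or.inr rfl)
  refine ⟨S, ?_, fun i hi => ?_⟩
  · obtain ⟨p⟩ := hG.preconnected a b
    obtain ⟨x, -, hx⟩ := hS p
    exact ⟨x, hx⟩
  · have hnsep : ¬ G.Separates a b (S \ {i}) := fun h =>
      hmin.not_prop_of_lt (Set.sdiff_singleton_ssubset.2 hi) ⟨Set.sdiff_subset.trans hSab, h⟩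
    simp only [Separates, not_forall, not_exists, not_and] at hnsep
    obtain ⟨p, hp⟩ := hnsep
    rw [Set.union_singleton]
    refine nc_insert_lt ha hb p (fun x hx => ?_) (by rwa [compl_compl])
    simpa [or_iff_not_imp_right] using hp x hx

lemma joinGraph_top : joinGraph (⊤ : SimpleGraph V) (⊤ : SimpleGraph W) = ⊤ := by
  ext (a | a) (b | b) <;> simp [joinGraph]

def joinGraphComm (G : SimpleGraph V) (G' : SimpleGraph W) :
    joinGraph G' G ≃g joinGraph G G' where
  toEquiv := Equiv.sumComm W V
  map_rel_iff' := by rintro (a | a) (b | b) <;> exact Iff.rfl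

lemma nc_joinGraph_image_inl (s : Set V) : nc (joinGraph G G') (Sum.inl '' s) = nc G s :=
  Eq.symm <| nc_congr
    { toEquiv := Equiv.Set.image Sum.inl s Sum.inl_injective
      map_rel_iff' := Iff.rfl }

lemma connected_induce_joinGraph_image_inl_union_inr (s : Set V) (y : W) :
    ((joinGraph G G').induce (Sum.inl '' s ∪ {Sum.inr y})).Connected := by
  refine connected_iff_exists_forall_reachable _ |>.2 ⟨⟨Sum.inr y, Or.inr rfl⟩, ?_⟩
  rintro ⟨v, ⟨x, -, rfl⟩ | rfl⟩
  · exact Adj.reachable (G := (joinGraph G G').induce _) trivial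
  · rfl

lemma cutPointProperty_joinGraph {S : Set V} (hS : CutPointProperty G S) (h : 1 < nc G Sᶜ) :
    CutPointProperty (joinGraph G G') (Sum.inl '' Sᶜ)ᶜ := by
  rintro (x | y) hi
  · have hx : x ∈ S := by simpa using hi
    rw [compl_compl, ← Set.image_singleton, ← Set.image_union, nc_joinGraph_image_inl,
      nc_joinGraph_image_inl]
    exact hS x hx
  · rwa [compl_compl, nc_eq_one (connected_induce_joinGraph_image_inl_union_inr _ y),
      nc_joinGraph_image_inl]

lemma not_isUnmixed_joinGraph [Finite V] [Finite W] [Nonempty W] (hG : G.Connected)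
    (hu : G.IsUnmixed) (hne : G ≠ ⊤) : ¬ (joinGraph G G').IsUnmixed := by
  intro hJ
  obtain ⟨S, hSne, hS⟩ := hG.exists_nonempty_cutPointProperty hne
  have hcS := hu S hS
  have hpos := hSne.ncard_pos (Set.toFinite S)
  have hcT := hJ _ (cutPointProperty_joinGraph hS (by omega))
  rw [compl_compl, nc_joinGraph_image_inl, hcS] at hcT
  have hlt : (Sum.inl '' S : Set (V ⊕ W)).ncard < (Sum.inl '' Sᶜ : Set (V ⊕ W))ᶜ.ncard := by
    refine Set.ncard_lt_ncard ⟨?_, fun h => ?_⟩ (Set.toFinite _)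
    · rintro _ ⟨x, hx, rfl⟩
      simpa using hx
    · obtain ⟨x, -, hx⟩ := h (show Sum.inr (Classical.arbitrary W) ∈ _ by simp)
      exact Sum.inl_ne_inr hx
  rw [Set.ncard_image_of_injective _ Sum.inl_injective] at hlt
  omega

end SimpleGraph

/-- the join of two connected unmixed graphs is unmixed (in the
Rauf–Rinaldo sense) iff both are complete. -/
theorem stmt12 {V₁ V₂ : Type*} [Fintype V₁] [Fintype V₂]
    (H₁ : SimpleGraph V₁) (H₂ : SimpleGraph V₂)
    (h₁ : H₁.Connected) (h₂ : H₂.Connected)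
    (hu₁ : ∀ T : Set V₁, CutPointProperty H₁ T → nc H₁ Tᶜ = T.ncard + 1)
    (hu₂ : ∀ T : Set V₂, CutPointProperty H₂ T → nc H₂ Tᶜ = T.ncard + 1) :
    (∀ T : Set (V₁ ⊕ V₂), CutPointProperty (joinGraph H₁ H₂) T →
        nc (joinGraph H₁ H₂) Tᶜ = T.ncard + 1) ↔
      (H₁ = ⊤ ∧ H₂ = ⊤) := by
  have := h₁.nonempty
  have := h₂.nonempty
  constructor
  · intro hJ
    constructor <;> by_contra hne
    · exact not_isUnmixed_joinGraph h₁ hu₁ hne hJ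
    · exact not_isUnmixed_joinGraph h₂ hu₂ hne (IsUnmixed.of_iso (joinGraphComm H₁ H₂) hJ)
  · rintro ⟨rfl, rfl⟩
    rw [joinGraph_top]
    exact isUnmixed_top
end
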